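/- arXiv:quant-ph/0604104 — 6 statements merged into one kernel-verified Lean document; each statement's English description precedes it below -/
import Mathlib

section
/- For unitary operators U, V on a finite-dimensional Hilbert space and unit vector ψ, there exists a real number x such that (1/2)‖(U - e^{ix}V)ψ‖² ≤ D_ψ(U,V)² ≤ ‖(U - V)ψ‖². -/
open scoped InnerProductSpace

variable {H : Type*} [NormedAddCommGroup H] [InnerProductSpace ℂ H] [FiniteDimensional ℂ H]

noncomputable def Dpsi (U V : H →L[ℂ] H) (ψ : H) : ℝ :=
  Real.sqrt (1 - ‖⟪ψ, (star U * V) ψ⟫_ℂ‖ ^ 2)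

noncomputable def uDist (U V : H →L[ℂ] H) : ℝ :=
  sSup {d : ℝ | ∃ ψ : H, ‖ψ‖ = 1 ∧ d = Dpsi U V ψ}

/-!
Write `c = ⟪Uψ, Vψ⟫`, so that `D_ψ(U,V)² = 1 - |c|²` with `|c| ≤ 1`. For unit vectors,
`‖Uψ - Vψ‖² = 2 - 2 Re c ≥ 2 - 2|c| ≥ 1 - |c|²`. Rotating `V` by the phase `e^{-i arg c}` turns
`c` into `|c|`, so `½‖(U - e^{-i arg c} V)ψ‖² = 1 - |c| ≤ 1 - |c|²`.
-/

theorem Complex.exp_neg_arg_mul_I_mul_self (c : ℂ) :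
    Complex.exp ((-c.arg : ℝ) * Complex.I) * c = ‖c‖ := by
  conv_lhs => rw [← Complex.norm_mul_exp_arg_mul_I c]
  rw [mul_left_comm, ← Complex.exp_add]
  simp

section UnitVectors

variable {E : Type*} [NormedAddCommGroup E] [InnerProductSpace ℂ E] {u v : E}

theorem norm_sub_sq_of_norm_eq_one (hu : ‖u‖ = 1) (hv : ‖v‖ = 1) :
    ‖u - v‖ ^ 2 = 2 - 2 * (⟪u, v⟫_ℂ).re := by
  rw [@norm_sub_sq ℂ, hu, hv, RCLike.re_to_complex]
  ring

theorem norm_inner_le_one_of_norm_eq_one (hu : ‖u‖ = 1) (hv : ‖v‖ = 1) : ‖⟪u, v⟫_ℂ‖ ≤ 1 := by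
  simpa [hu, hv] using norm_inner_le_norm (𝕜 := ℂ) u v

theorem norm_sub_exp_neg_arg_smul_sq (hu : ‖u‖ = 1) (hv : ‖v‖ = 1) :
    ‖u - Complex.exp ((-(⟪u, v⟫_ℂ).arg : ℝ) * Complex.I) • v‖ ^ 2 = 2 - 2 * ‖⟪u, v⟫_ℂ‖ := by
  have hphase : ‖Complex.exp ((-(⟪u, v⟫_ℂ).arg : ℝ) * Complex.I)‖ = 1 :=
    Complex.norm_exp_ofReal_mul_I _
  rw [norm_sub_sq_of_norm_eq_one hu (by rw [norm_smul, hphase, hv, one_mul]), inner_smul_right,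
    Complex.exp_neg_arg_mul_I_mul_self, Complex.ofReal_re]

end UnitVectors

theorem ContinuousLinearMap.inner_star_mul_apply {E : Type*} [NormedAddCommGroup E]
    [InnerProductSpace ℂ E] [CompleteSpace E] (U V : E →L[ℂ] E) (ψ : E) :
    ⟪ψ, (star U * V) ψ⟫_ℂ = ⟪U ψ, V ψ⟫_ℂ := by
  rw [mul_apply_eq_comp, ContinuousLinearMap.star_eq_adjoint,
    ContinuousLinearMap.adjoint_inner_right]

theorem Dpsi_sq_eq {U V : H →L[ℂ] H} (hU : U ∈ unitary (H →L[ℂ] H))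
    (hV : V ∈ unitary (H →L[ℂ] H)) {ψ : H} (hψ : ‖ψ‖ = 1) :
    Dpsi U V ψ ^ 2 = 1 - ‖⟪U ψ, V ψ⟫_ℂ‖ ^ 2 := by
  have hle := norm_inner_le_one_of_norm_eq_one (by rw [U.norm_map_of_mem_unitary hU, hψ])
    (by rw [V.norm_map_of_mem_unitary hV, hψ])
  rw [Dpsi, U.inner_star_mul_apply, Real.sq_sqrt]
  nlinarith [norm_nonneg ⟪U ψ, V ψ⟫_ℂ]

theorem stmt_2 (U V : H →L[ℂ] H) (hU : U ∈ unitary (H →L[ℂ] H))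
    (hV : V ∈ unitary (H →L[ℂ] H)) (ψ : H) (hψ : ‖ψ‖ = 1) :
    ∃ x : ℝ,
      (1 / 2) * ‖(U - Complex.exp ((x : ℂ) * Complex.I) • V) ψ‖ ^ 2 ≤ Dpsi U V ψ ^ 2 ∧
        Dpsi U V ψ ^ 2 ≤ ‖(U - V) ψ‖ ^ 2 := by
  have hUψ : ‖U ψ‖ = 1 := by rw [U.norm_map_of_mem_unitary hU, hψ]
  have hVψ : ‖V ψ‖ = 1 := by rw [V.norm_map_of_mem_unitary hV, hψ]
  set c := ⟪U ψ, V ψ⟫_ℂ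
  have hc_le : ‖c‖ ≤ 1 := norm_inner_le_one_of_norm_eq_one hUψ hVψ
  refine ⟨-c.arg, ?_, ?_⟩
  · rw [sub_apply, smul_apply, norm_sub_exp_neg_arg_smul_sq hUψ hVψ, Dpsi_sq_eq hU hV hψ]
    nlinarith [norm_nonneg c]
  · rw [sub_apply, norm_sub_sq_of_norm_eq_one hUψ hVψ, Dpsi_sq_eq hU hV hψ]
    nlinarith [Complex.re_le_norm c]
end

section
/- Let W be a unitary operator on a finite-dimensional Hilbert space with eigenvalues e^{ic_1}, ..., e^{ic_n} where 0 = c_1 ≤ c_2 ≤ ... ≤ c_n < π (all eigenvalues lie in the closed upper semicircle with 1 an eigenvalue). Then D(1,W) = sin(c_n/2), i.e., min over unit ψ of |⟨ψ, Wψ⟩| = cos(c_n/2). -/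
open scoped InnerProductSpace

variable {H : Type*} [NormedAddCommGroup H] [InnerProductSpace ℂ H] [FiniteDimensional ℂ H]

/-
Expanding a unit vector ψ in the eigenbasis, ⟪ψ, W ψ⟫ = ∑ₖ |ψₖ|² e^{i cₖ} is a convex combination
of points of the arc of the unit circle from 1 to e^{i cₙ}. Rotating by e^{-i cₙ/2} centres that arc
on 1, and since every |cₖ - cₙ/2| ≤ cₙ/2 < π/2, the real part of the rotated sum, hence its modulus,
is at least cos (cₙ/2). The bound is attained at (b₀ + bₙ)/√2, where ⟪ψ, W ψ⟫ = (1 + e^{i cₙ})/2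
has modulus cos (cₙ/2); and D(1, W) = √(1 - min |⟪ψ, W ψ⟫|²) = sin (cₙ/2).
-/

section
variable {ι E F : Type*} [NormedAddCommGroup E] [InnerProductSpace ℂ E] [FunLike F E E]
  [LinearMapClass F ℂ E E]

theorem OrthonormalBasis.inner_map_self_eq_sum_of_apply_eq_smul [Fintype ι]
    (b : OrthonormalBasis ι ℂ E) {T : F} {μ : ι → ℂ} (hT : ∀ i, T (b i) = μ i • b i) (x : E) :
    ⟪x, T x⟫_ℂ = ∑ i, ((‖⟪b i, x⟫_ℂ‖ ^ 2 : ℝ) : ℂ) * μ i := by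
  nth_rw 2 [← b.sum_repr' x]
  simp only [map_sum, map_smul, hT, inner_sum, inner_smul_right]
  refine Finset.sum_congr rfl fun i _ => ?_
  rw [← inner_conj_symm x, mul_left_comm, Complex.mul_conj', mul_comm, Complex.ofReal_pow]

theorem Orthonormal.exists_inner_map_self_eq_midpoint {v : ι → E} (hv : Orthonormal ℂ v)
    {T : F} {μ : ι → ℂ} (hT : ∀ i, T (v i) = μ i • v i) (i j : ι) :
    ∃ x : E, ‖x‖ = 1 ∧ ⟪x, T x⟫_ℂ = (μ i + μ j) / 2 := by
  obtain rfl | hij := eq_or_ne i j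
  · refine ⟨v i, hv.1 i, ?_⟩
    rw [hT, inner_smul_right, inner_self_eq_one_of_norm_eq_one (hv.1 i)]
    ring
  · have hvij := hv.2 hij
    have hvji := hv.2 hij.symm
    have hnorm : ‖v i + v j‖ = Real.sqrt 2 := by
      rw [← Real.sqrt_sq (norm_nonneg _), sq,
        norm_add_sq_eq_norm_sq_add_norm_sq_of_inner_eq_zero _ _ hvij, hv.1 i, hv.1 j]
      norm_num
    refine ⟨((Real.sqrt 2)⁻¹ : ℂ) • (v i + v j), ?_, ?_⟩
    · rw [norm_smul, hnorm, norm_inv, Complex.norm_real, Real.norm_of_nonneg (by positivity)]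
      exact inv_mul_cancel₀ (by positivity)
    · simp only [map_smul, map_add, hT, inner_smul_left, inner_smul_right, inner_add_left,
        inner_add_right, hvij, hvji, inner_self_eq_one_of_norm_eq_one (hv.1 _)]
      have hsqrt : (Real.sqrt 2 : ℂ) ^ 2 = 2 := by
        exact_mod_cast Real.sq_sqrt (by norm_num : (0 : ℝ) ≤ 2)
      simp only [map_inv₀, Complex.conj_ofReal]
      field_simp
      linear_combination -(μ i + μ j) * hsqrt
end

theorem Complex.cos_le_norm_sum_mul_exp {ι : Type*} {s : Finset ι} {p c : ι → ℝ} {a δ : ℝ}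
    (hp : ∀ i ∈ s, 0 ≤ p i) (hp₁ : ∑ i ∈ s, p i = 1) (hc : ∀ i ∈ s, |c i - a| ≤ δ)
    (hδ : δ ≤ Real.pi) :
    Real.cos δ ≤ ‖∑ i ∈ s, (p i : ℂ) * exp (c i * I)‖ := by
  have hrot : ∀ i, exp (-a * I) * ((p i : ℂ) * exp (c i * I)) =
      p i * exp ((c i - a : ℝ) * I) := by
    intro i
    rw [mul_left_comm, ← Complex.exp_add]
    push_cast
    ring_nf
  calc Real.cos δ = ∑ i ∈ s, p i * Real.cos δ := by rw [← Finset.sum_mul, hp₁, one_mul]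
    _ ≤ ∑ i ∈ s, p i * Real.cos (c i - a) := by
        refine Finset.sum_le_sum fun i hi => mul_le_mul_of_nonneg_left ?_ (hp i hi)
        rw [← Real.cos_abs (c i - a)]
        exact Real.cos_le_cos_of_nonneg_of_le_pi (abs_nonneg _) hδ (hc i hi)
    _ = (exp (-a * I) * ∑ i ∈ s, (p i : ℂ) * exp (c i * I)).re := by
        simp only [Finset.mul_sum, hrot, Complex.re_sum, Complex.re_ofReal_mul,
          Complex.exp_ofReal_mul_I_re]
    _ ≤ ‖exp (-a * I) * ∑ i ∈ s, (p i : ℂ) * exp (c i * I)‖ := Complex.re_le_norm _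
    _ = ‖∑ i ∈ s, (p i : ℂ) * exp (c i * I)‖ := by
        rw [norm_mul, ← Complex.ofReal_neg, Complex.norm_exp_ofReal_mul_I, one_mul]

theorem Complex.norm_one_add_exp_div_two (θ : ℝ) :
    ‖(1 + exp (θ * I)) / 2‖ = |Real.cos (θ / 2)| := by
  have : (1 + exp (θ * I)) / 2 = exp ((θ / 2 : ℝ) * I) * Real.cos (θ / 2) := by
    rw [Complex.ofReal_cos, Complex.cos, mul_div_assoc', mul_add, ← Complex.exp_add,
      ← Complex.exp_add]
    push_cast
    ring_nf
    rw [Complex.exp_zero]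
    ring
  rw [this, norm_mul, Complex.norm_exp_ofReal_mul_I, one_mul, Complex.norm_real, Real.norm_eq_abs]

theorem Real.sqrt_one_sub_sq_le_sin {t x : ℝ} (ht₀ : 0 ≤ t) (ht : t ≤ Real.pi / 2)
    (hx : Real.cos t ≤ x) : √(1 - x ^ 2) ≤ Real.sin t := by
  have hcos : 0 ≤ Real.cos t := Real.cos_nonneg_of_mem_Icc ⟨by linarith [Real.pi_pos], ht⟩
  rw [Real.sin_eq_sqrt_one_sub_cos_sq ht₀ (by linarith [Real.pi_pos])]
  exact Real.sqrt_le_sqrt (by nlinarith)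

theorem uDist_one_eq_sin_of_isLeast {W : H →L[ℂ] H} {t : ℝ} (ht₀ : 0 ≤ t)
    (ht : t ≤ Real.pi / 2)
    (h : IsLeast {r : ℝ | ∃ ψ : H, ‖ψ‖ = 1 ∧ r = ‖⟪ψ, W ψ⟫_ℂ‖} (Real.cos t)) :
    uDist 1 W = Real.sin t := by
  have hDpsi : ∀ ψ : H, Dpsi 1 W ψ = √(1 - ‖⟪ψ, W ψ⟫_ℂ‖ ^ 2) := by
    intro ψ
    rw [Dpsi, star_one, one_mul]
  obtain ⟨⟨ψ₀, hψ₀, hψ₀cos⟩, hcos_le⟩ := h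
  refine IsGreatest.csSup_eq ⟨⟨ψ₀, hψ₀, ?_⟩, ?_⟩
  · rw [hDpsi, ← hψ₀cos, Real.sin_eq_sqrt_one_sub_cos_sq ht₀ (by linarith [Real.pi_pos])]
  · rintro _ ⟨ψ, hψ, rfl⟩
    rw [hDpsi]
    exact Real.sqrt_one_sub_sq_le_sin ht₀ ht (hcos_le ⟨ψ, hψ, rfl⟩)

theorem stmt_5_general {n : ℕ} (W : H →L[ℂ] H)
    (b : OrthonormalBasis (Fin (n + 1)) ℂ H) (c : Fin (n + 1) → ℝ)
    (hmono : Monotone c) (h0 : c 0 = 0) (hπ : c (Fin.last n) < Real.pi)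
    (heig : ∀ k, W (b k) = Complex.exp ((c k : ℂ) * Complex.I) • b k) :
    uDist 1 W = Real.sin (c (Fin.last n) / 2) ∧
      sInf {r : ℝ | ∃ ψ : H, ‖ψ‖ = 1 ∧ r = ‖⟪ψ, W ψ⟫_ℂ‖} =
        Real.cos (c (Fin.last n) / 2) := by
  set θ := c (Fin.last n)
  have hc : ∀ i, 0 ≤ c i ∧ c i ≤ θ := fun i => ⟨h0 ▸ hmono (Fin.zero_le i), hmono (Fin.le_last i)⟩
  have hθ₀ : 0 ≤ θ / 2 := by linarith [(hc 0).2]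
  have hθπ : θ / 2 ≤ Real.pi / 2 := by linarith
  have hcos_le : ∀ ψ : H, ‖ψ‖ = 1 → Real.cos (θ / 2) ≤ ‖⟪ψ, W ψ⟫_ℂ‖ := by
    intro ψ hψ
    rw [b.inner_map_self_eq_sum_of_apply_eq_smul heig ψ]
    refine Complex.cos_le_norm_sum_mul_exp (a := θ / 2) (fun _ _ => sq_nonneg _) ?_
      (fun i _ => abs_le.mpr ⟨by linarith [hc i], by linarith [hc i]⟩) (by linarith)
    rw [b.sum_sq_norm_inner_right, hψ, one_pow]
  obtain ⟨ψ₀, hψ₀, hψ₀W⟩ := b.orthonormal.exists_inner_map_self_eq_midpoint heig 0 (Fin.last n)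
  have hψ₀cos : ‖⟪ψ₀, W ψ₀⟫_ℂ‖ = Real.cos (θ / 2) := by
    rw [hψ₀W, h0, Complex.ofReal_zero, zero_mul, Complex.exp_zero,
      Complex.norm_one_add_exp_div_two,
      abs_of_nonneg (Real.cos_nonneg_of_mem_Icc ⟨by linarith [Real.pi_pos], hθπ⟩)]
  have hleast : IsLeast {r : ℝ | ∃ ψ : H, ‖ψ‖ = 1 ∧ r = ‖⟪ψ, W ψ⟫_ℂ‖} (Real.cos (θ / 2)) :=
    ⟨⟨ψ₀, hψ₀, hψ₀cos.symm⟩, by rintro _ ⟨ψ, hψ, rfl⟩; exact hcos_le ψ hψ⟩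
  exact ⟨uDist_one_eq_sin_of_isLeast hθ₀ hθπ hleast, hleast.csInf_eq⟩

theorem stmt_5 {n : ℕ} (W : H →L[ℂ] H) (hW : W ∈ unitary (H →L[ℂ] H))
    (b : OrthonormalBasis (Fin (n + 1)) ℂ H) (c : Fin (n + 1) → ℝ)
    (hmono : Monotone c) (h0 : c 0 = 0) (hπ : c (Fin.last n) < Real.pi)
    (heig : ∀ k, W (b k) = Complex.exp ((c k : ℂ) * Complex.I) • b k) :
    uDist 1 W = Real.sin (c (Fin.last n) / 2) ∧
      sInf {r : ℝ | ∃ ψ : H, ‖ψ‖ = 1 ∧ r = ‖⟪ψ, W ψ⟫_ℂ‖} =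
        Real.cos (c (Fin.last n) / 2) :=
  stmt_5_general W b c hmono h0 hπ heig
end

section
/- For angles 0 = c_1 ≤ c_2 ≤ ... ≤ c_n < π and nonnegative reals p_1, ..., p_n summing to 1, the line segment from the origin to the point ∑_i p_i e^{ic_i} intersects the line segment joining 1 and e^{ic_n}; equivalently, there exist r ∈ [0,1] and x ∈ [0,1] with r ∑_i p_i e^{ic_i} = x + (1-x) e^{ic_n}. -/
/-!
Let `θ = c_n` and rotate everything by `e^{-iθ/2}`. The segment `[1, e^{iθ}]` becomes the vertical
segment `cos(θ/2) + i t`, `|t| ≤ sin(θ/2)`, while each rotated point `e^{i(c_k - θ/2)}` has angle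
in `[-θ/2, θ/2]`. Hence the rotated average `w` has `Re w ≥ cos(θ/2) > 0` and `|Im w| ≤ sin(θ/2)`,
and shrinking `w` by `r = cos(θ/2) / Re w ≤ 1` puts it on the vertical segment.
-/

open Real Finset Complex

lemma cos_le_cos_of_abs_le {φ α : ℝ} (hφ : |φ| ≤ α) (hα : α ≤ π) : Real.cos α ≤ Real.cos φ := by
  rw [← Real.cos_abs φ]
  exact Real.cos_le_cos_of_nonneg_of_le_pi (abs_nonneg φ) hα hφ

lemma abs_sin_le_sin_of_abs_le {φ α : ℝ} (hφ : |φ| ≤ α) (hα : α ≤ π / 2) :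
    |Real.sin φ| ≤ Real.sin α := by
  obtain ⟨hφl, hφu⟩ := abs_le.mp hφ
  rw [abs_le, ← Real.sin_neg]
  constructor <;>
    exact Real.sin_le_sin_of_le_of_le_pi_div_two (by linarith) (by linarith) (by linarith)

section WeightedAverage

variable {ι : Type*} [Fintype ι] {p φ : ι → ℝ} {α : ℝ}

lemma re_sum_ofReal_mul_exp : (∑ i, (p i : ℂ) * exp (φ i * I)).re = ∑ i, p i * Real.cos (φ i) := by
  simp only [re_sum, re_ofReal_mul, exp_ofReal_mul_I_re]

lemma im_sum_ofReal_mul_exp : (∑ i, (p i : ℂ) * exp (φ i * I)).im = ∑ i, p i * Real.sin (φ i) := by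
  simp only [im_sum, im_ofReal_mul, exp_ofReal_mul_I_im]

variable (hp : ∀ i, 0 ≤ p i) (hsum : ∑ i, p i = 1) (hφ : ∀ i, |φ i| ≤ α)
include hp hsum hφ

lemma cos_le_re_sum_ofReal_mul_exp (hα : α ≤ π) :
    Real.cos α ≤ (∑ i, (p i : ℂ) * exp (φ i * I)).re := by
  rw [re_sum_ofReal_mul_exp]
  calc Real.cos α = ∑ i, p i * Real.cos α := by rw [← sum_mul, hsum, one_mul]
    _ ≤ ∑ i, p i * Real.cos (φ i) :=
      sum_le_sum fun i _ => mul_le_mul_of_nonneg_left (cos_le_cos_of_abs_le (hφ i) hα) (hp i)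

lemma abs_im_sum_ofReal_mul_exp_le (hα : α ≤ π / 2) :
    |(∑ i, (p i : ℂ) * exp (φ i * I)).im| ≤ Real.sin α := by
  rw [im_sum_ofReal_mul_exp]
  calc |∑ i, p i * Real.sin (φ i)| ≤ ∑ i, |p i * Real.sin (φ i)| := abs_sum_le_sum_abs _ _
    _ ≤ ∑ i, p i * Real.sin α := sum_le_sum fun i _ => by
      rw [abs_mul, abs_of_nonneg (hp i)]
      exact mul_le_mul_of_nonneg_left (abs_sin_le_sin_of_abs_le (hφ i) hα) (hp i)
    _ = Real.sin α := by rw [← sum_mul, hsum, one_mul]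

end WeightedAverage

lemma exists_ofReal_mul_eq_add_mul_I {w : ℂ} {a b : ℝ} (ha : 0 < a) (hre : a ≤ w.re)
    (him : |w.im| ≤ b) : ∃ r ∈ Set.Icc (0 : ℝ) 1, ∃ t : ℝ, |t| ≤ b ∧ (r : ℂ) * w = a + t * I := by
  have hw : 0 < w.re := ha.trans_le hre
  have hr : a / w.re ≤ 1 := (div_le_one hw).mpr hre
  refine ⟨a / w.re, ⟨(div_pos ha hw).le, hr⟩, a / w.re * w.im, ?_, ?_⟩
  · rw [abs_mul, abs_of_pos (div_pos ha hw)]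
    exact (mul_le_of_le_one_left (abs_nonneg _) hr).trans him
  · apply Complex.ext <;> simp [div_mul_cancel₀ a hw.ne']

lemma exists_mem_Icc_eq_one_sub_two_mul_mul {s t : ℝ} (h : |t| ≤ s) :
    ∃ x ∈ Set.Icc (0 : ℝ) 1, t = (1 - 2 * x) * s := by
  have ht : t ∈ segment ℝ (-s) s := by
    rw [segment_eq_Icc (by linarith [abs_nonneg t])]
    exact abs_le.mp h
  obtain ⟨x, y, hx, hy, hxy, rfl⟩ := ht
  exact ⟨x, ⟨hx, by linarith⟩, by simp only [smul_eq_mul]; linear_combination s * hxy⟩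

lemma add_one_sub_mul_exp_two_mul_I (x α : ℝ) :
    (x : ℂ) + (1 - x) * exp ((2 * α : ℝ) * I) =
      exp (α * I) * (Real.cos α + ((1 - 2 * x) * Real.sin α : ℝ) * I) := by
  apply Complex.ext <;>
    simp only [add_re, add_im, mul_re, mul_im, ofReal_re, ofReal_im, sub_re, sub_im, one_re, one_im,
      I_re, I_im, exp_ofReal_mul_I_re, exp_ofReal_mul_I_im, Real.cos_two_mul, Real.sin_two_mul]
  · linear_combination (1 - 2 * x) * Real.sin_sq_add_cos_sq α
  · ring

theorem stmt_7 {n : ℕ} (c : Fin (n + 1) → ℝ) (hmono : Monotone c) (h0 : c 0 = 0)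
    (hπ : c (Fin.last n) < Real.pi) (p : Fin (n + 1) → ℝ) (hp : ∀ i, 0 ≤ p i)
    (hsum : ∑ i, p i = 1) :
    ∃ r x : ℝ, r ∈ Set.Icc (0 : ℝ) 1 ∧ x ∈ Set.Icc (0 : ℝ) 1 ∧
      (r : ℂ) * ∑ i, (p i : ℂ) * Complex.exp ((c i : ℂ) * Complex.I) =
        (x : ℂ) + (1 - (x : ℂ)) * Complex.exp ((c (Fin.last n) : ℂ) * Complex.I) := by
  obtain ⟨α, hθ⟩ : ∃ α, c (Fin.last n) = 2 * α := ⟨c (Fin.last n) / 2, by ring⟩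
  have hφ : ∀ i, |c i - α| ≤ α := fun i => abs_le.mpr
    ⟨by linarith [h0 ▸ hmono (Fin.zero_le i)], by linarith [hmono (Fin.le_last i)]⟩
  rw [hθ] at hπ ⊢
  have hα0 : 0 ≤ α := (abs_nonneg _).trans (hφ 0)
  have hα : α < π / 2 := by linarith
  have hrot : ∑ i, (p i : ℂ) * exp (c i * I) =
      exp (α * I) * ∑ i, (p i : ℂ) * exp ((c i - α : ℝ) * I) := by
    rw [mul_sum]
    refine sum_congr rfl fun i _ => ?_
    rw [mul_left_comm, ← Complex.exp_add]
    congr 2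
    push_cast
    ring
  obtain ⟨r, hr, t, ht, hrw⟩ := exists_ofReal_mul_eq_add_mul_I
    (Real.cos_pos_of_mem_Ioo ⟨by linarith [Real.pi_pos], hα⟩)
    (cos_le_re_sum_ofReal_mul_exp hp hsum hφ (by linarith [Real.pi_pos]))
    (abs_im_sum_ofReal_mul_exp_le hp hsum hφ hα.le)
  obtain ⟨x, hx, rfl⟩ := exists_mem_Icc_eq_one_sub_two_mul_mul ht
  refine ⟨r, x, hr, hx, ?_⟩
  rw [hrot, mul_left_comm, hrw, add_one_sub_mul_exp_two_mul_I]
end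

section
/- D satisfies the triangle inequality: for any unitary operators U, V, W on a finite-dimensional Hilbert space, D(U,W) ≤ D(U,V) + D(V,W). -/
open scoped InnerProductSpace

variable {H : Type*} [NormedAddCommGroup H] [InnerProductSpace ℂ H] [FiniteDimensional ℂ H]

/-!
Since `⟪ψ, (star U * V) ψ⟫ = ⟪U ψ, V ψ⟫`, for a unit vector `ψ` the number `Dpsi U V ψ` is the
distance from the unit vector `U ψ` to the line `ℂ ∙ V ψ`, attained at the orthogonal projection
`⟪V ψ, U ψ⟫ • V ψ`. Such point-to-line distances satisfy the triangle inequality: passing from `x`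
through `⟪y, x⟫ • y` to the line through `z` costs at most `d(x, 𝕜 ∙ y) + |⟪y, x⟫| d(y, 𝕜 ∙ z)`,
and `|⟪y, x⟫| ≤ 1`. Taking suprema over `ψ` gives the claim.
-/

section LineDistance

variable {𝕜 E : Type*} [RCLike 𝕜] [NormedAddCommGroup E] [InnerProductSpace 𝕜 E]

theorem norm_sub_smul_sq_of_norm_eq_one {y : E} (hy : ‖y‖ = 1) (x : E) (c : 𝕜) :
    ‖x - c • y‖ ^ 2 = ‖x - ⟪y, x⟫_𝕜 • y‖ ^ 2 + ‖⟪y, x⟫_𝕜 - c‖ ^ 2 := by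
  have hyy : ⟪y, y⟫_𝕜 = 1 := by simp [inner_self_eq_norm_sq_to_K, hy]
  have horth : ⟪x - ⟪y, x⟫_𝕜 • y, (⟪y, x⟫_𝕜 - c) • y⟫_𝕜 = 0 := by
    simp only [inner_sub_left, inner_smul_left, inner_smul_right, inner_conj_symm, hyy]
    ring
  have hsplit : x - c • y = (x - ⟪y, x⟫_𝕜 • y) + (⟪y, x⟫_𝕜 - c) • y := by module
  rw [hsplit, sq, sq, sq, norm_add_sq_eq_norm_sq_add_norm_sq_of_inner_eq_zero _ _ horth, norm_smul,
    hy, mul_one]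

theorem norm_sub_inner_smul_le {y : E} (hy : ‖y‖ = 1) (x : E) (c : 𝕜) :
    ‖x - ⟪y, x⟫_𝕜 • y‖ ≤ ‖x - c • y‖ := by
  refine le_of_sq_le_sq ?_ (norm_nonneg _)
  rw [norm_sub_smul_sq_of_norm_eq_one hy x c]
  exact le_add_of_nonneg_right (sq_nonneg _)

theorem norm_sub_inner_smul_eq_sqrt {x y : E} (hx : ‖x‖ = 1) (hy : ‖y‖ = 1) :
    ‖x - ⟪y, x⟫_𝕜 • y‖ = Real.sqrt (1 - ‖⟪y, x⟫_𝕜‖ ^ 2) := by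
  have h := norm_sub_smul_sq_of_norm_eq_one hy x (0 : 𝕜)
  rw [zero_smul, sub_zero, sub_zero, hx] at h
  rw [← Real.sqrt_sq (norm_nonneg (x - ⟪y, x⟫_𝕜 • y))]
  congr 1
  linarith

theorem norm_sub_inner_smul_triangle {x y z : E} (hx : ‖x‖ ≤ 1) (hy : ‖y‖ = 1) (hz : ‖z‖ = 1) :
    ‖x - ⟪z, x⟫_𝕜 • z‖ ≤ ‖x - ⟪y, x⟫_𝕜 • y‖ + ‖y - ⟪z, y⟫_𝕜 • z‖ := by
  have hxy : ‖⟪y, x⟫_𝕜‖ ≤ 1 := by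
    simpa [hy] using (norm_inner_le_norm (𝕜 := 𝕜) y x).trans (mul_le_mul_of_nonneg_left hx
      (norm_nonneg y))
  calc ‖x - ⟪z, x⟫_𝕜 • z‖ ≤ ‖x - (⟪y, x⟫_𝕜 * ⟪z, y⟫_𝕜) • z‖ := norm_sub_inner_smul_le hz x _
    _ = ‖(x - ⟪y, x⟫_𝕜 • y) + ⟪y, x⟫_𝕜 • (y - ⟪z, y⟫_𝕜 • z)‖ := by congr 1; module
    _ ≤ ‖x - ⟪y, x⟫_𝕜 • y‖ + ‖⟪y, x⟫_𝕜‖ * ‖y - ⟪z, y⟫_𝕜 • z‖ := by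
      grw [norm_add_le, norm_smul]
    _ ≤ ‖x - ⟪y, x⟫_𝕜 • y‖ + ‖y - ⟪z, y⟫_𝕜 • z‖ := by
      gcongr
      exact mul_le_of_le_one_left (norm_nonneg _) hxy

end LineDistance

theorem Dpsi_eq_norm_sub_inner_smul {U V : H →L[ℂ] H} (hU : U ∈ unitary (H →L[ℂ] H))
    (hV : V ∈ unitary (H →L[ℂ] H)) {ψ : H} (hψ : ‖ψ‖ = 1) :
    Dpsi U V ψ = ‖U ψ - ⟪V ψ, U ψ⟫_ℂ • V ψ‖ := by
  rw [norm_sub_inner_smul_eq_sqrt (by rwa [U.norm_map_of_mem_unitary hU])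
    (by rwa [V.norm_map_of_mem_unitary hV]), norm_inner_symm, Dpsi,
    ← ContinuousLinearMap.adjoint_inner_right, ← ContinuousLinearMap.star_eq_adjoint]
  rfl

theorem Dpsi_triangle {U V W : H →L[ℂ] H} (hU : U ∈ unitary (H →L[ℂ] H))
    (hV : V ∈ unitary (H →L[ℂ] H)) (hW : W ∈ unitary (H →L[ℂ] H)) {ψ : H} (hψ : ‖ψ‖ = 1) :
    Dpsi U W ψ ≤ Dpsi U V ψ + Dpsi V W ψ := by
  rw [Dpsi_eq_norm_sub_inner_smul hU hW hψ, Dpsi_eq_norm_sub_inner_smul hU hV hψ,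
    Dpsi_eq_norm_sub_inner_smul hV hW hψ]
  exact norm_sub_inner_smul_triangle (by rw [U.norm_map_of_mem_unitary hU, hψ])
    (by rwa [V.norm_map_of_mem_unitary hV]) (by rwa [W.norm_map_of_mem_unitary hW])

theorem Dpsi_le_uDist (U V : H →L[ℂ] H) {ψ : H} (hψ : ‖ψ‖ = 1) : Dpsi U V ψ ≤ uDist U V := by
  refine le_csSup ⟨1, ?_⟩ ⟨ψ, hψ, rfl⟩
  rintro d ⟨φ, -, rfl⟩
  exact Real.sqrt_le_one.mpr (sub_le_self _ (sq_nonneg _))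

theorem uDist_nonneg (U V : H →L[ℂ] H) : 0 ≤ uDist U V :=
  Real.sSup_nonneg fun _ ⟨_, _, hd⟩ => hd ▸ Real.sqrt_nonneg _

theorem stmt_12 (U V W : H →L[ℂ] H) (hU : U ∈ unitary (H →L[ℂ] H))
    (hV : V ∈ unitary (H →L[ℂ] H)) (hW : W ∈ unitary (H →L[ℂ] H)) :
    uDist U W ≤ uDist U V + uDist V W := by
  refine Real.sSup_le ?_ (add_nonneg (uDist_nonneg U V) (uDist_nonneg V W))
  rintro d ⟨ψ, hψ, rfl⟩
  exact (Dpsi_triangle hU hV hW hψ).trans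
    (add_le_add (Dpsi_le_uDist U V hψ) (Dpsi_le_uDist V W hψ))
end

section
/- Let R(U) = min_{‖ψ‖=1} |⟨ψ, Uψ⟩|². For any unitary operators U, V on a finite-dimensional Hilbert space, R(U) + R(V) - R(UV) - 2√((1-R(U))(1-R(V))) ≤ 1. -/
set_option linter.unusedSectionVars false
set_option maxHeartbeats 800000

open scoped InnerProductSpace

variable {H : Type*} [NormedAddCommGroup H] [InnerProductSpace ℂ H] [FiniteDimensional ℂ H]

noncomputable def Rfun (U : H →L[ℂ] H) : ℝ :=
  sInf {r : ℝ | ∃ ψ : H, ‖ψ‖ = 1 ∧ r = ‖⟪ψ, U ψ⟫_ℂ‖ ^ 2}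

lemma Rfun_nonneg (U : H →L[ℂ] H) : 0 ≤ Rfun U :=
  Real.sInf_nonneg (by rintro r ⟨ψ, -, rfl⟩; positivity)

lemma Rfun_le (U : H →L[ℂ] H) (ψ : H) (hψ : ‖ψ‖ = 1) :
    Rfun U ≤ ‖⟪ψ, U ψ⟫_ℂ‖ ^ 2 :=
  csInf_le ⟨0, by rintro r ⟨φ, -, rfl⟩; positivity⟩ ⟨ψ, hψ, rfl⟩

lemma inner_norm_le_one (U : H →L[ℂ] H) (hU : U ∈ unitary (H →L[ℂ] H))
    (ψ : H) (hψ : ‖ψ‖ = 1) : ‖⟪ψ, U ψ⟫_ℂ‖ ≤ 1 := by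
  calc ‖⟪ψ, U ψ⟫_ℂ‖ ≤ ‖ψ‖ * ‖U ψ‖ := norm_inner_le_norm _ _
  _ = 1 := by rw [U.norm_map_of_mem_unitary hU, hψ]; ring

lemma inner_orthP (U : H →L[ℂ] H) (hU : U ∈ unitary (H →L[ℂ] H)) (ψ p : H)
    (hψ : ‖ψ‖ = 1) (hp : ⟪ψ, p⟫_ℂ = 0) :
    ‖⟪ψ, U p⟫_ℂ‖ ≤ ‖p‖ * Real.sqrt (1 - ‖⟪ψ, U ψ⟫_ℂ‖ ^ 2) := by
  set z := ContinuousLinearMap.adjoint U ψ with hz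
  set t : ℂ := ⟪ψ, z⟫_ℂ with ht
  have hψψ : ⟪ψ, ψ⟫_ℂ = 1 := by
    rw [inner_self_eq_norm_sq_to_K, hψ]; norm_num
  have hzn : ‖z‖ = 1 := by
    rw [hz, ← ContinuousLinearMap.star_eq_adjoint]
    exact (ContinuousLinearMap.norm_map_of_mem_unitary (Unitary.star_mem hU) ψ).trans hψ
  have htc : t = starRingEnd ℂ ⟪ψ, U ψ⟫_ℂ := by
    rw [ht, hz, ContinuousLinearMap.adjoint_inner_right, ← inner_conj_symm]
  have htu : ‖t‖ = ‖⟪ψ, U ψ⟫_ℂ‖ := by rw [htc, RCLike.norm_conj]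
  have horth : ⟪z - t • ψ, t • ψ⟫_ℂ = 0 := by
    rw [inner_smul_right, inner_sub_left, inner_smul_left, ← inner_conj_symm z ψ, ← ht, hψψ]
    ring
  have hpyth : ‖z - t • ψ‖ ^ 2 = 1 - ‖⟪ψ, U ψ⟫_ℂ‖ ^ 2 := by
    have := norm_add_sq (𝕜 := ℂ) (z - t • ψ) (t • ψ)
    rw [horth, sub_add_cancel] at this
    simp only [map_zero, mul_zero, add_zero, norm_smul, hψ, mul_one] at this
    rw [hzn] at this
    rw [← htu]; nlinarith [this]
  have hnorm : ‖z - t • ψ‖ = Real.sqrt (1 - ‖⟪ψ, U ψ⟫_ℂ‖ ^ 2) := by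
    rw [← hpyth, Real.sqrt_sq (norm_nonneg _)]
  have hinner : ⟪ψ, U p⟫_ℂ = ⟪z - t • ψ, p⟫_ℂ := by
    rw [inner_sub_left, inner_smul_left, hp, mul_zero, sub_zero, hz,
      ContinuousLinearMap.adjoint_inner_left]
  calc ‖⟪ψ, U p⟫_ℂ‖ = ‖⟪z - t • ψ, p⟫_ℂ‖ := by rw [hinner]
  _ ≤ ‖z - t • ψ‖ * ‖p‖ := norm_inner_le_norm _ _
  _ = ‖p‖ * Real.sqrt (1 - ‖⟪ψ, U ψ⟫_ℂ‖ ^ 2) := by rw [hnorm]; ring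

lemma key_lower (U V : H →L[ℂ] H) (hU : U ∈ unitary (H →L[ℂ] H))
    (hV : V ∈ unitary (H →L[ℂ] H)) (ψ : H) (hψ : ‖ψ‖ = 1) :
    Real.sqrt (Rfun U) * Real.sqrt (Rfun V)
      - Real.sqrt (1 - Rfun U) * Real.sqrt (1 - Rfun V) ≤ ‖⟪ψ, (U * V) ψ⟫_ℂ‖ := by
  have hψψ : ⟪ψ, ψ⟫_ℂ = 1 := by
    rw [inner_self_eq_norm_sq_to_K, hψ]; norm_num
  set c : ℂ := ⟪ψ, V ψ⟫_ℂ with hc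
  set p : H := V ψ - c • ψ with hpdef
  have hp : ⟪ψ, p⟫_ℂ = 0 := by
    rw [hpdef, inner_sub_right, inner_smul_right, hψψ, mul_one, ← hc, sub_self]
  set u : ℝ := ‖⟪ψ, U ψ⟫_ℂ‖ with hu
  set v : ℝ := ‖c‖ with hv
  have hu0 : 0 ≤ u := norm_nonneg _
  have hv0 : 0 ≤ v := norm_nonneg _
  have hu1 : u ≤ 1 := inner_norm_le_one U hU ψ hψ
  have hv1 : v ≤ 1 := inner_norm_le_one V hV ψ hψ
  have hVψ : ‖V ψ‖ = 1 := (V.norm_map_of_mem_unitary hV ψ).trans hψ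
  have hcp : ⟪c • ψ, p⟫_ℂ = 0 := by rw [inner_smul_left, hp, mul_zero]
  have hpn2 : ‖p‖ ^ 2 = 1 - v ^ 2 := by
    have h1 : c • ψ + p = V ψ := by rw [hpdef]; abel
    have := norm_add_sq (𝕜 := ℂ) (c • ψ) p
    rw [hcp, h1, hVψ] at this
    simp only [map_zero, mul_zero, add_zero, norm_smul, hψ, mul_one] at this
    rw [hv]; nlinarith [this]
  have hpn : ‖p‖ = Real.sqrt (1 - v ^ 2) := by
    rw [← hpn2, Real.sqrt_sq (norm_nonneg _)]
  have hdec : ⟪ψ, (U * V) ψ⟫_ℂ = c * ⟪ψ, U ψ⟫_ℂ + ⟪ψ, U p⟫_ℂ := by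
    have h1 : (U * V) ψ = U (c • ψ + p) := by
      rw [ContinuousLinearMap.mul_apply, hpdef]; congr 1; abel
    rw [h1, map_add, map_smul, inner_add_right, inner_smul_right]
  have hlow : v * u - Real.sqrt (1 - v ^ 2) * Real.sqrt (1 - u ^ 2)
      ≤ ‖⟪ψ, (U * V) ψ⟫_ℂ‖ := by
    have h2 : ‖⟪ψ, U p⟫_ℂ‖ ≤ Real.sqrt (1 - v ^ 2) * Real.sqrt (1 - u ^ 2) := by
      have := inner_orthP U hU ψ p hψ hp
      rwa [hpn, ← hu] at this
    have h3 : ‖c * ⟪ψ, U ψ⟫_ℂ‖ = v * u := by rw [norm_mul]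
    calc v * u - Real.sqrt (1 - v ^ 2) * Real.sqrt (1 - u ^ 2)
        ≤ ‖c * ⟪ψ, U ψ⟫_ℂ‖ - ‖⟪ψ, U p⟫_ℂ‖ := by rw [h3]; linarith
    _ ≤ ‖c * ⟪ψ, U ψ⟫_ℂ + ⟪ψ, U p⟫_ℂ‖ := by
        have h7 := norm_sub_le (c * ⟪ψ, U ψ⟫_ℂ + ⟪ψ, U p⟫_ℂ) (⟪ψ, U p⟫_ℂ)
        simp only [add_sub_cancel_right] at h7
        linarith
    _ = ‖⟪ψ, (U * V) ψ⟫_ℂ‖ := by rw [hdec]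
  -- monotonicity step
  have hau : Real.sqrt (Rfun U) ≤ u := by
    have := Real.sqrt_le_sqrt (Rfun_le U ψ hψ)
    rwa [← hu, Real.sqrt_sq hu0] at this
  have hbv : Real.sqrt (Rfun V) ≤ v := by
    have := Real.sqrt_le_sqrt (Rfun_le V ψ hψ)
    rwa [← hc, ← hv, Real.sqrt_sq hv0] at this
  have hau' : Real.sqrt (1 - u ^ 2) ≤ Real.sqrt (1 - Rfun U) :=
    Real.sqrt_le_sqrt (by have := Rfun_le U ψ hψ; rw [← hu] at this; linarith)
  have hbv' : Real.sqrt (1 - v ^ 2) ≤ Real.sqrt (1 - Rfun V) :=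
    Real.sqrt_le_sqrt (by have := Rfun_le V ψ hψ; rw [← hc, ← hv] at this; linarith)
  have hm1 : Real.sqrt (Rfun U) * Real.sqrt (Rfun V) ≤ v * u :=
    mul_le_mul hau hbv (Real.sqrt_nonneg _) hu0 |>.trans_eq (mul_comm u v)
  have hm2 : Real.sqrt (1 - v ^ 2) * Real.sqrt (1 - u ^ 2)
      ≤ Real.sqrt (1 - Rfun U) * Real.sqrt (1 - Rfun V) := by
    calc Real.sqrt (1 - v ^ 2) * Real.sqrt (1 - u ^ 2)
        ≤ Real.sqrt (1 - Rfun V) * Real.sqrt (1 - Rfun U) :=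
          mul_le_mul hbv' hau' (Real.sqrt_nonneg _) (Real.sqrt_nonneg _)
    _ = Real.sqrt (1 - Rfun U) * Real.sqrt (1 - Rfun V) := mul_comm _ _
  linarith

theorem stmt_15 (U V : H →L[ℂ] H) (hU : U ∈ unitary (H →L[ℂ] H))
    (hV : V ∈ unitary (H →L[ℂ] H)) :
    Rfun U + Rfun V - Rfun (U * V) - 2 * Real.sqrt ((1 - Rfun U) * (1 - Rfun V)) ≤ 1 := by
  by_cases hne : ∃ ψ : H, ‖ψ‖ = 1
  · obtain ⟨ψ₀, hψ₀⟩ := hne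
    set a := Rfun U with hadef
    set b := Rfun V with hbdef
    have ha0 : 0 ≤ a := Rfun_nonneg U
    have hb0 : 0 ≤ b := Rfun_nonneg V
    have ha1 : a ≤ 1 := by
      have h1 := Rfun_le U ψ₀ hψ₀
      have h2 := inner_norm_le_one U hU ψ₀ hψ₀
      nlinarith [norm_nonneg (⟪ψ₀, U ψ₀⟫_ℂ)]
    have hb1 : b ≤ 1 := by
      have h1 := Rfun_le V ψ₀ hψ₀
      have h2 := inner_norm_le_one V hV ψ₀ hψ₀
      nlinarith [norm_nonneg (⟪ψ₀, V ψ₀⟫_ℂ)]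
    have hsqmul : Real.sqrt ((1 - a) * (1 - b)) = Real.sqrt (1 - a) * Real.sqrt (1 - b) :=
      Real.sqrt_mul (by linarith) _
    set α := Real.sqrt a with hα
    set β := Real.sqrt b with hβ
    set α' := Real.sqrt (1 - a) with hα'
    set β' := Real.sqrt (1 - b) with hβ'
    have hα2 : α ^ 2 = a := Real.sq_sqrt ha0
    have hβ2 : β ^ 2 = b := Real.sq_sqrt hb0
    have hα'2 : α' ^ 2 = 1 - a := Real.sq_sqrt (by linarith)
    have hβ'2 : β' ^ 2 = 1 - b := Real.sq_sqrt (by linarith)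
    have hα0 : 0 ≤ α := Real.sqrt_nonneg _
    have hβ0 : 0 ≤ β := Real.sqrt_nonneg _
    have hα'0 : 0 ≤ α' := Real.sqrt_nonneg _
    have hβ'0 : 0 ≤ β' := Real.sqrt_nonneg _
    have hα1 : α ≤ 1 := by rw [hα]; exact Real.sqrt_le_one.mpr ha1
    have hβ1 : β ≤ 1 := by rw [hβ]; exact Real.sqrt_le_one.mpr hb1
    rw [hsqmul]
    -- it suffices that a + b - 1 - 2 α' β' ≤ Rfun (U * V)
    have hW0 : 0 ≤ Rfun (U * V) := Rfun_nonneg _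
    rcases le_or_gt (α * β - α' * β') 0 with hf | hf
    · -- then a*b ≤ (1-a)(1-b), so a + b ≤ 1
      have : α * β ≤ α' * β' := by linarith
      have h4 : a * b ≤ (1 - a) * (1 - b) := by
        nlinarith [mul_nonneg hα0 hβ0]
      nlinarith [mul_nonneg hα'0 hβ'0]
    · -- Rfun (U*V) ≥ (αβ - α'β')²
      have hWge : (α * β - α' * β') ^ 2 ≤ Rfun (U * V) := by
        rw [Rfun]
        refine le_csInf ⟨‖⟪ψ₀, (U * V) ψ₀⟫_ℂ‖ ^ 2, ψ₀, hψ₀, rfl⟩ ?_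
        rintro r ⟨ψ, hψ, rfl⟩
        have h5 := key_lower U V hU hV ψ hψ
        have h6 : α * β - α' * β' ≤ ‖⟪ψ, (U * V) ψ⟫_ℂ‖ := h5
        nlinarith [norm_nonneg (⟪ψ, (U * V) ψ⟫_ℂ)]
      have hαβ1 : α * β ≤ 1 := by nlinarith
      have e1 : (α * β - α' * β') ^ 2
          = α ^ 2 * β ^ 2 - 2 * (α * β) * (α' * β') + α' ^ 2 * β' ^ 2 := by ring
      rw [hα2, hβ2, hα'2, hβ'2] at e1
      have h6 : 0 ≤ α' * β' * (1 - α * β) :=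
        mul_nonneg (mul_nonneg hα'0 hβ'0) (by linarith)
      have h7 : 0 ≤ (1 - a) * (1 - b) := mul_nonneg (by linarith) (by linarith)
      nlinarith [hWge, e1, h6, h7]
  · have hkey : ∀ W : H →L[ℂ] H, Rfun W = 0 := by
      intro W
      have hset : {r : ℝ | ∃ ψ : H, ‖ψ‖ = 1 ∧ r = ‖⟪ψ, W ψ⟫_ℂ‖ ^ 2} = ∅ := by
        ext r
        simp only [Set.mem_setOf_eq, Set.mem_empty_iff_false, iff_false, not_exists]
        intro ψ h
        exact hne ⟨ψ, h.1⟩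
      rw [Rfun, hset, Real.sInf_empty]
    rw [hkey U, hkey V, hkey (U * V)]
    norm_num
end

section
/- For unitary operators U, V on a finite-dimensional Hilbert space, there exists a real number x such that D(U,V) = (1/2)‖U - e^{ix}V‖, where ‖·‖ is the operator norm. -/
/-!
Put `W = U⋆V`. Then `Dpsi U V ψ` only depends on the point `⟪ψ, W ψ⟫` of the numerical range `N`
of `W`, and for `‖μ‖ = 1` and a unit vector `ψ`,
`‖(U - μ • V) ψ‖² = 2 - 2 Re (μ ⟪ψ, W ψ⟫)`.
As `W` is normal, `N` is the convex hull of its eigenvalues. The point `c` of `N` closest to `0`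
satisfies `|c|² ≤ Re (c̄ z)` on `N`, so the phase `μ = c̄ / |c|` gives
`½ ‖U - μ • V‖ ≤ √(1 - |c|²) ≤ uDist U V`. An eigenvalue `λ` of `W` gives the phase `μ = -λ̄` with
`½ ‖U - μ • V‖ ≥ 1 ≥ uDist U V`. The intermediate value theorem in the phase finishes the proof.
-/

open scoped InnerProductSpace

variable {H : Type*} [NormedAddCommGroup H] [InnerProductSpace ℂ H] [FiniteDimensional ℂ H]

open scoped RealInnerProductSpace ComplexConjugate
open Module Complex

theorem Convex.exists_mem_forall_norm_sq_le_inner {F : Type*} [NormedAddCommGroup F]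
    [InnerProductSpace ℝ F] {K : Set F} (hK : Convex ℝ K) (hKc : IsComplete K)
    (hne : K.Nonempty) : ∃ c ∈ K, ∀ z ∈ K, ‖c‖ ^ 2 ≤ ⟪c, z⟫_ℝ := by
  obtain ⟨c, hc, hmin⟩ := exists_norm_eq_iInf_of_complete_convex hne hKc hK 0
  refine ⟨c, hc, fun z hz => ?_⟩
  have := (norm_eq_iInf_iff_real_inner_le_zero hK hc).mp hmin z hz
  rw [zero_sub, inner_neg_left, inner_sub_right, real_inner_self_eq_norm_sq] at this
  linarith

theorem Complex.exp_neg_arg_mul_I_mul_self_s18 (z : ℂ) : exp (↑(-arg z) * I) * z = ‖z‖ := by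
  calc exp (↑(-arg z) * I) * z = exp (↑(-arg z) * I) * (‖z‖ * exp (arg z * I)) := by
        rw [norm_mul_exp_arg_mul_I]
    _ = ‖z‖ := by rw [mul_left_comm, ← Complex.exp_add]; simp

namespace ContinuousLinearMap

variable {E : Type*} [NormedAddCommGroup E] [InnerProductSpace ℂ E]

def numericalRange (T : E →L[ℂ] E) : Set ℂ := (fun x => ⟪x, T x⟫_ℂ) '' Metric.sphere 0 1

theorem isCompact_numericalRange [FiniteDimensional ℂ E] (T : E →L[ℂ] E) :
    IsCompact T.numericalRange :=
  (isCompact_sphere 0 1).image (by fun_prop)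

theorem numericalRange_nonempty [Nontrivial E] (T : E →L[ℂ] E) : T.numericalRange.Nonempty :=
  (NormedSpace.sphere_nonempty.mpr zero_le_one).image _

theorem inner_apply_self_eq_sum {ι : Type*} [Fintype ι] {T : E →L[ℂ] E}
    (b : OrthonormalBasis ι ℂ E) {μ : ι → ℂ} (hT : ∀ j, T (b j) = μ j • b j) (x : E) :
    ⟪x, T x⟫_ℂ = ∑ j, ‖b.repr x j‖ ^ 2 • μ j := by
  have hTx : T x = ∑ j, (b.repr x j * μ j) • b j := by
    conv_lhs => rw [← b.sum_repr x]
    simp [hT, smul_smul]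
  calc ⟪x, T x⟫_ℂ = ⟪∑ j, b.repr x j • b j, ∑ j, (b.repr x j * μ j) • b j⟫_ℂ := by
        rw [b.sum_repr, hTx]
    _ = ∑ j, ‖b.repr x j‖ ^ 2 • μ j := by
        rw [b.orthonormal.inner_sum]
        refine Finset.sum_congr rfl fun j _ => ?_
        rw [← mul_assoc, Complex.conj_mul', Complex.real_smul]
        norm_cast

theorem numericalRange_eq_image_stdSimplex {ι : Type*} [Fintype ι] {T : E →L[ℂ] E}
    (b : OrthonormalBasis ι ℂ E) {μ : ι → ℂ} (hT : ∀ j, T (b j) = μ j • b j) :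
    T.numericalRange = Fintype.linearCombination ℝ μ '' stdSimplex ℝ ι := by
  ext z
  simp only [numericalRange, Set.mem_image, mem_sphere_iff_norm, sub_zero,
    Fintype.linearCombination_apply]
  constructor
  · rintro ⟨x, hx, rfl⟩
    refine ⟨fun j => ‖b.repr x j‖ ^ 2, ⟨fun j => by positivity, ?_⟩,
      (inner_apply_self_eq_sum b hT x).symm⟩
    simp [b.repr_apply_apply, b.sum_sq_norm_inner_right, hx]
  · rintro ⟨t, ⟨ht0, ht1⟩, rfl⟩
    refine ⟨b.repr.symm (WithLp.toLp 2 fun j => (Real.sqrt (t j) : ℂ)), ?_, ?_⟩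
    · rw [LinearIsometryEquiv.norm_map, EuclideanSpace.norm_eq]
      simp [Real.sq_sqrt (ht0 _), ht1]
    · rw [inner_apply_self_eq_sum b hT]
      simp [Real.sq_sqrt (ht0 _)]

theorem exists_orthonormalBasis_apply_eq_smul [FiniteDimensional ℂ E] (T : E →L[ℂ] E)
    [IsStarNormal T] :
    ∃ (b : OrthonormalBasis (Fin (finrank ℂ E)) ℂ E) (μ : Fin (finrank ℂ E) → ℂ),
      ∀ j, T (b j) = μ j • b j := by
  classical
  -- simultaneously diagonalize the commuting self-adjoint operators `ℜ T` and `ℑ T`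
  set A : E →ₗ[ℂ] E := ((realPart T : E →L[ℂ] E) : E →ₗ[ℂ] E)
  set B : E →ₗ[ℂ] E := ((imaginaryPart T : E →L[ℂ] E) : E →ₗ[ℂ] E)
  have hA : A.IsSymmetric := isSelfAdjoint_iff_isSymmetric.mp (realPart T).2
  have hB : B.IsSymmetric := isSelfAdjoint_iff_isSymmetric.mp (imaginaryPart T).2
  have hAB : Commute A B := (Commute.realPart_imaginaryPart T).map toLinearMapRingHom
  set V : ℂ × ℂ → Submodule ℂ E :=
    fun i => Module.End.eigenspace A i.2 ⊓ Module.End.eigenspace B i.1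
  have hV : DirectSum.IsInternal V := hA.directSum_isInternal_of_commute hB hAB
  have : Fintype {i // V i ≠ ⊥} := hV.submodule_iSupIndep.fintypeNeBotOfFiniteDimensional
  have hV' := DirectSum.isInternal_ne_bot_iff.mpr hV
  have hVo : OrthogonalFamily ℂ (fun i : {i // V i ≠ ⊥} => V i) fun i => (V i).subtypeₗᵢ :=
    (hA.orthogonalFamily_eigenspace_inf_eigenspace hB).comp Subtype.val_injective
  refine ⟨hV'.subordinateOrthonormalBasis rfl hVo, fun j =>
    let i := (hV'.subordinateOrthonormalBasisIndex rfl j hVo).1; i.2 + I * i.1, fun j => ?_⟩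
  obtain ⟨hAj, hBj⟩ :=
    Submodule.mem_inf.mp (hV'.subordinateOrthonormalBasis_subordinate rfl j hVo)
  rw [Module.End.mem_eigenspace_iff] at hAj hBj
  conv_lhs => rw [← realPart_add_I_smul_imaginaryPart T]
  simp only [add_apply, smul_apply]
  change A _ + I • B _ = _
  rw [hAj, hBj, add_smul, smul_smul]

theorem convex_numericalRange [FiniteDimensional ℂ E] (T : E →L[ℂ] E) [IsStarNormal T] :
    Convex ℝ T.numericalRange := by
  obtain ⟨b, μ, hT⟩ := exists_orthonormalBasis_apply_eq_smul T
  rw [numericalRange_eq_image_stdSimplex b hT]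
  exact (convex_stdSimplex ℝ _).linear_image _

theorem exists_norm_eq_one_apply_eq_smul [FiniteDimensional ℂ E] [Nontrivial E]
    (T : E →L[ℂ] E) : ∃ (x : E) (c : ℂ), ‖x‖ = 1 ∧ T x = c • x := by
  obtain ⟨c, hc⟩ := Module.End.exists_eigenvalue (T : E →ₗ[ℂ] E)
  obtain ⟨v, hv, hv0⟩ := hc.exists_hasEigenvector
  refine ⟨(‖v‖⁻¹ : ℂ) • v, c, ?_, ?_⟩
  · rw [norm_smul, norm_inv, Complex.norm_real, norm_norm,
      inv_mul_cancel₀ (norm_ne_zero_iff.mpr hv0)]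
  · rw [map_smul, smul_comm]
    exact congrArg _ (Module.End.mem_eigenspace_iff.mp hv)

variable [CompleteSpace E]

theorem norm_le_one_of_mem_numericalRange {W : E →L[ℂ] E} (hW : W ∈ unitary (E →L[ℂ] E))
    {z : ℂ} (hz : z ∈ W.numericalRange) : ‖z‖ ≤ 1 := by
  obtain ⟨x, hx, rfl⟩ := hz
  rw [mem_sphere_zero_iff_norm] at hx
  calc ‖⟪x, W x⟫_ℂ‖ ≤ ‖x‖ * ‖W x‖ := norm_inner_le_norm _ _
    _ = 1 := by rw [norm_map_of_mem_unitary hW, hx, one_mul]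

theorem norm_sub_smul_apply_sq {U V : E →L[ℂ] E} (hU : U ∈ unitary (E →L[ℂ] E))
    (hV : V ∈ unitary (E →L[ℂ] E)) {μ : ℂ} (hμ : ‖μ‖ = 1) (x : E) :
    ‖(U - μ • V) x‖ ^ 2 = 2 * ‖x‖ ^ 2 - 2 * (μ * ⟪x, (star U * V) x⟫_ℂ).re := by
  have hUV : ⟪x, (star U * V) x⟫_ℂ = ⟪U x, V x⟫_ℂ := by
    rw [star_eq_adjoint]
    exact adjoint_inner_right U x (V x)
  rw [hUV, sub_apply, smul_apply, @norm_sub_sq ℂ, inner_smul_right, norm_smul, hμ,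
    norm_map_of_mem_unitary hU, norm_map_of_mem_unitary hV]
  simp only [RCLike.re_to_complex]
  ring

end ContinuousLinearMap

open ContinuousLinearMap Real

theorem uDist_of_subsingleton [Subsingleton H] (U V : H →L[ℂ] H) : uDist U V = 0 := by
  refine (congrArg sSup (Set.eq_empty_of_forall_notMem ?_)).trans Real.sSup_empty
  rintro d ⟨ψ, hψ, -⟩
  simp [Subsingleton.elim ψ 0] at hψ

theorem Dpsi_le_one (U V : H →L[ℂ] H) (ψ : H) : Dpsi U V ψ ≤ 1 :=
  Real.sqrt_le_one.mpr (by linarith [sq_nonneg ‖⟪ψ, (star U * V) ψ⟫_ℂ‖])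

theorem uDist_le_one (U V : H →L[ℂ] H) : uDist U V ≤ 1 :=
  Real.sSup_le (fun _ ⟨ψ, _, hd⟩ => hd ▸ Dpsi_le_one U V ψ) zero_le_one

theorem sqrt_one_sub_sq_le_uDist {U V : H →L[ℂ] H} {z : ℂ}
    (hz : z ∈ (star U * V).numericalRange) : √(1 - ‖z‖ ^ 2) ≤ uDist U V := by
  obtain ⟨ψ, hψ, rfl⟩ := hz
  exact le_csSup ⟨1, fun _ ⟨ψ, _, hd⟩ => hd ▸ Dpsi_le_one U V ψ⟩
    ⟨ψ, mem_sphere_zero_iff_norm.mp hψ, rfl⟩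

variable {U V : H →L[ℂ] H}

theorem exists_half_norm_sub_exp_smul_le_uDist [Nontrivial H] (hU : U ∈ unitary (H →L[ℂ] H))
    (hV : V ∈ unitary (H →L[ℂ] H)) :
    ∃ x : ℝ, 1 / 2 * ‖U - exp (x * I) • V‖ ≤ uDist U V := by
  set W := star U * V
  have hW : W ∈ unitary (H →L[ℂ] H) := mul_mem (Unitary.star_mem hU) hV
  have : IsStarNormal W := isStarNormal_of_mem_unitary hW
  obtain ⟨c, hc, hsupp⟩ := W.convex_numericalRange.exists_mem_forall_norm_sq_le_inner
    W.isCompact_numericalRange.isClosed.isComplete W.numericalRange_nonempty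
  have hc1 := norm_le_one_of_mem_numericalRange hW hc
  set μ := exp (↑(-arg c) * I)
  have hμ : ‖μ‖ = 1 := norm_exp_ofReal_mul_I _
  have hconj : conj c = ‖c‖ * μ := by
    conv_lhs => rw [← norm_mul_exp_arg_mul_I c]
    rw [map_mul, conj_ofReal, ← exp_conj, map_mul, conj_ofReal, conj_I]
    simp only [μ, ofReal_neg, neg_mul, mul_neg]
  set δ := uDist U V
  have hδ : 0 ≤ δ ∧ 1 - ‖c‖ ^ 2 ≤ δ ^ 2 := by
    have h := sqrt_one_sub_sq_le_uDist hc
    have h0 := Real.sqrt_nonneg (1 - ‖c‖ ^ 2)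
    refine ⟨h0.trans h, ?_⟩
    rw [← Real.sq_sqrt (by nlinarith [norm_nonneg c] : 0 ≤ 1 - ‖c‖ ^ 2)]
    exact pow_le_pow_left₀ h0 h 2
  have hpt : ∀ ψ : H, ‖ψ‖ = 1 → ‖(U - μ • V) ψ‖ ≤ 2 * δ := by
    intro ψ hψ
    have hz : ⟪ψ, W ψ⟫_ℂ ∈ W.numericalRange := ⟨ψ, mem_sphere_zero_iff_norm.mpr hψ, rfl⟩
    set r := (μ * ⟪ψ, W ψ⟫_ℂ).re
    have hsupp' : ‖c‖ ^ 2 ≤ ‖c‖ * r := by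
      have := hsupp _ hz
      rwa [Complex.inner, hconj, mul_comm _ (‖c‖ * μ : ℂ), mul_assoc, re_ofReal_mul] at this
    have hr1 : -1 ≤ r := by
      have := abs_re_le_norm (μ * ⟪ψ, W ψ⟫_ℂ)
      rw [norm_mul, hμ, one_mul] at this
      linarith [abs_le.mp this, norm_le_one_of_mem_numericalRange hW hz]
    have hr : 2 * ‖c‖ ^ 2 - 1 ≤ r := by nlinarith [norm_nonneg c]
    have hsq := norm_sub_smul_apply_sq hU hV hμ ψ
    rw [hψ] at hsq
    nlinarith [norm_nonneg ((U - μ • V) ψ)]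
  refine ⟨-arg c, ?_⟩
  linarith [opNorm_le_of_unit_norm (by linarith) hpt]

theorem exists_uDist_le_half_norm_sub_exp_smul [Nontrivial H] (hU : U ∈ unitary (H →L[ℂ] H))
    (hV : V ∈ unitary (H →L[ℂ] H)) :
    ∃ x : ℝ, uDist U V ≤ 1 / 2 * ‖U - exp (x * I) • V‖ := by
  set W := star U * V
  obtain ⟨ψ, c, hψ, hWψ⟩ := W.exists_norm_eq_one_apply_eq_smul
  have hc : ‖c‖ = 1 := by
    have := norm_map_of_mem_unitary (mul_mem (Unitary.star_mem hU) hV) ψ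
    rwa [hWψ, norm_smul, hψ, mul_one] at this
  have hinner : ⟪ψ, W ψ⟫_ℂ = c := by
    rw [hWψ, inner_smul_right, inner_self_eq_norm_sq_to_K, hψ]; simp
  set μ := exp ((π - arg c : ℝ) * I)
  have hμc : μ * c = -1 := by
    simp only [μ]
    rw [show ((π - arg c : ℝ) : ℂ) * I = π * I + ↑(-arg c) * I by push_cast; ring,
      Complex.exp_add, mul_assoc, exp_neg_arg_mul_I_mul_self_s18, hc, exp_pi_mul_I]
    simp
  have h4 : ‖(U - μ • V) ψ‖ ^ 2 = 4 := by
    rw [norm_sub_smul_apply_sq hU hV (norm_exp_ofReal_mul_I _) ψ, hψ, hinner, hμc]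
    norm_num
  have h2 : 2 ≤ ‖U - μ • V‖ := by
    have := (U - μ • V).le_opNorm ψ
    rw [hψ, mul_one] at this
    nlinarith [norm_nonneg ((U - μ • V) ψ)]
  refine ⟨π - arg c, ?_⟩
  linarith [uDist_le_one U V]

theorem stmt_18 (U V : H →L[ℂ] H) (hU : U ∈ unitary (H →L[ℂ] H))
    (hV : V ∈ unitary (H →L[ℂ] H)) :
    ∃ x : ℝ, uDist U V = (1 / 2) * ‖U - Complex.exp ((x : ℂ) * Complex.I) • V‖ := by
  rcases subsingleton_or_nontrivial H with hH | hH
  · refine ⟨0, ?_⟩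
    rw [Subsingleton.elim (U - _) 0, norm_zero, mul_zero, uDist_of_subsingleton]
  obtain ⟨x₁, hx₁⟩ := exists_half_norm_sub_exp_smul_le_uDist hU hV
  obtain ⟨x₂, hx₂⟩ := exists_uDist_le_half_norm_sub_exp_smul hU hV
  have hcont : Continuous fun x : ℝ => 1 / 2 * ‖U - exp (x * I) • V‖ := by fun_prop
  obtain ⟨x, -, hx⟩ :=
    intermediate_value_uIcc hcont.continuousOn (Set.mem_uIcc.mpr (Or.inl ⟨hx₁, hx₂⟩))
  exact ⟨x, hx.symm⟩
end
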